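/- arXiv:1406.5744 — 3 statements merged into one kernel-verified Lean document; each statement's English description precedes it below -/
import Mathlib

section
/- The K-linear maps ∂₋, ∂₊, δ of K(t)[M] determined by ∂₋(Qχ^m) = 2(v₀(m)Q + tQ′)χ^{m−e}, ∂₊(Qχ^m) = 2((v₀(m)(1 − 1/t) + v₁(m))Q + (t−1)Q′)χ^{m+e}, and δ(Qχ^m) = −2v₁(m)·Q·χ^m are K-derivations of K(t)[M] and satisfy the sl₂-relations ∂₊∘∂₋ − ∂₋∘∂₊ = δ, δ∘∂₊ − ∂₊∘δ = 2∂₊, and δ∘∂₋ − ∂₋∘δ = −2∂₋. -/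
/-!
Each of `∂₋, ∂₊, δ` has the shape `Qχ^m ↦ (c(m)·Q + P·Q′)χ^{m+s}` with `c : M → K(t)` additive,
and any such map is a derivation: on monomials, Leibniz reduces to `c(m+n) = c(m) + c(n)` and the
Leibniz rule for `′`. Derivations of `K(t)[M]` agreeing on monomials coincide, so the
sl₂-relations become identities in the differential field `(K(t), ′)` on a single monomial, which
follow from `t′ = 1`, `v₀(m ± e) = v₀(m) ± 1/2`, `v₁(m ± e) = v₁(m) ∓ 1` and the fact that
rational constants have derivative zero.
-/

open AddMonoidAlgebra

namespace AddMonoidAlgebra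

variable {R A M : Type*} [CommSemiring R] [CommSemiring A] [Algebra R A] [AddCommMonoid M]

section ShiftDerivation

variable (D : Derivation R A A) (s : M) (c : M →+ A) (P : A)

noncomputable def shiftDerivationLinearMap : A[M] →ₗ[R] A[M] :=
  Finsupp.lsum R (fun m => lsingle (m + s) ∘ₗ
      (LinearMap.mulLeft R (c m) + LinearMap.mulLeft R P ∘ₗ D.toLinearMap)) ∘ₗ
    (coeffLinearEquiv R).toLinearMap

theorem shiftDerivationLinearMap_single (m : M) (a : A) :
    shiftDerivationLinearMap D s c P (single m a) = single (m + s) (c m * a + P * D a) := by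
  simp [shiftDerivationLinearMap]

theorem shiftDerivationLinearMap_leibniz (x y : A[M]) :
    shiftDerivationLinearMap D s c P (x * y) =
      x * shiftDerivationLinearMap D s c P y + y * shiftDerivationLinearMap D s c P x := by
  induction x using induction_linear with
  | zero => simp
  | add x x' hx hx' => rw [add_mul, map_add, hx, hx', map_add]; ring
  | single m a =>
    induction y using induction_linear with
    | zero => simp
    | add y y' hy hy' => rw [mul_add, map_add, hy, hy', map_add]; ring
    | single n b =>
      rw [single_mul_single, shiftDerivationLinearMap_single, shiftDerivationLinearMap_single,
        shiftDerivationLinearMap_single, single_mul_single, single_mul_single,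
        show m + (n + s) = m + n + s by abel, show n + (m + s) = m + n + s by abel, ← single_add]
      congr 1
      rw [map_add, D.leibniz, smul_eq_mul, smul_eq_mul]
      ring

noncomputable def shiftDerivation : Derivation R A[M] A[M] where
  toLinearMap := shiftDerivationLinearMap D s c P
  map_one_eq_zero' := by
    rw [one_def, shiftDerivationLinearMap_single, map_zero, D.map_one_eq_zero]
    simp
  leibniz' x y := shiftDerivationLinearMap_leibniz D s c P x y

theorem shiftDerivation_single (m : M) (a : A) :
    shiftDerivation D s c P (single m a) = single (m + s) (c m * a + P * D a) :=
  shiftDerivationLinearMap_single D s c P m a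

end ShiftDerivation

theorem derivation_ext_single {N : Type*} [AddCommMonoid N] [Module A[M] N] [Module R N]
    {D₁ D₂ : Derivation R A[M] N}
    (h : ∀ m a, D₁ (single m a) = D₂ (single m a)) : D₁ = D₂ :=
  Derivation.ext <| LinearMap.congr_fun <|
    lhom_ext' (f := D₁.toLinearMap) (g := D₂.toLinearMap) fun m => LinearMap.ext fun a => h m a

end AddMonoidAlgebra

namespace Derivation

@[simp]
theorem map_ofNat {R A N : Type*} [CommSemiring R] [CommSemiring A] [Algebra R A]
    [AddCommMonoid N] [Module A N] [Module R N] (D : Derivation R A N) (n : ℕ) [n.AtLeastTwo] :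
    D (OfNat.ofNat n : A) = 0 := by
  rw [← Nat.cast_ofNat, D.map_natCast]

theorem map_ratCast {R F N : Type*} [CommRing R] [Field F] [CharZero F] [Algebra R F]
    [AddCommGroup N] [Module F N] [Module R N] (D : Derivation R F N) (q : ℚ) :
    D (q : F) = 0 := by
  rw [Rat.cast_def, D.leibniz_div, D.map_intCast, D.map_natCast]
  simp

end Derivation

/-! `lowering`, `raising` and `weight` are `∂₋`, `∂₊` and `δ`, with `t ∈ F` in the role of the
variable of `K(t)`. -/

namespace SkewSl2

variable {K F M : Type*} [Field K] [Field F] [Algebra K F] [AddCommGroup M]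
  (D : Derivation K F F) (t : F) (v₀ : M →+ ℚ) (v₁ : M →+ ℤ) (e : M)

variable (K F) in
noncomputable def weight : Derivation K F[M] F[M] :=
  shiftDerivation 0 0 (.mk' (fun m => -(2 * (v₁ m : F))) fun m n => by
    rw [map_add, Int.cast_add]; ring) 0

theorem weight_single (m : M) (Q : F) :
    weight K F v₁ (single m Q) = single m (-(2 * (v₁ m : F)) * Q) := by
  rw [weight, shiftDerivation_single, AddMonoidHom.mk'_apply, add_zero, zero_mul, add_zero]

variable [CharZero F]

noncomputable def lowering : Derivation K F[M] F[M] :=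
  shiftDerivation D (-e) (.mk' (fun m => 2 * (v₀ m : F)) fun m n => by
    rw [map_add, Rat.cast_add, mul_add]) (2 * t)

noncomputable def raising : Derivation K F[M] F[M] :=
  shiftDerivation D e
    (.mk' (fun m => 2 * ((v₀ m : F) * (1 - t⁻¹) + (v₁ m : F))) fun m n => by
      rw [map_add, map_add, Rat.cast_add, Int.cast_add]; ring)
    (2 * (t - 1))

theorem lowering_single (m : M) (Q : F) :
    lowering D t v₀ e (single m Q) = single (m - e) (2 * ((v₀ m : F) * Q + t * D Q)) := by
  rw [lowering, shiftDerivation_single, ← sub_eq_add_neg, AddMonoidHom.mk'_apply]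
  ring_nf

theorem raising_single (m : M) (Q : F) :
    raising D t v₀ v₁ e (single m Q) =
      single (m + e) (2 * (((v₀ m : F) * (1 - t⁻¹) + (v₁ m : F)) * Q + (t - 1) * D Q)) := by
  rw [raising, shiftDerivation_single, AddMonoidHom.mk'_apply]
  ring_nf

variable {D t v₀ v₁ e}

theorem weight_raising (hv₁e : v₁ e = -1) :
    ⁅weight K F v₁, raising D t v₀ v₁ e⁆ = 2 • raising D t v₀ v₁ e := by
  refine derivation_ext_single fun m Q => ?_
  rw [Derivation.commutator_apply, Derivation.smul_apply, raising_single, weight_single,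
    weight_single, raising_single, ← single_sub, smul_single]
  congr 1
  simp only [map_add, hv₁e, Derivation.leibniz, smul_eq_mul, D.map_intCast, D.map_ofNat,
    map_neg]
  push_cast
  ring

theorem weight_lowering (hv₁e : v₁ e = -1) :
    ⁅weight K F v₁, lowering D t v₀ e⁆ = -(2 • lowering D t v₀ e) := by
  refine derivation_ext_single fun m Q => ?_
  rw [Derivation.commutator_apply, Derivation.neg_apply, Derivation.smul_apply, lowering_single,
    weight_single, weight_single, lowering_single, ← single_sub, smul_single, ← single_neg]
  congr 1
  simp only [map_sub, hv₁e, Derivation.leibniz, smul_eq_mul, D.map_intCast, D.map_ofNat,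
    map_neg]
  push_cast
  ring

theorem raising_lowering (ht : t ≠ 0) (hDt : D t = 1) (hv₀e : 2 * v₀ e = 1)
    (hv₁e : v₁ e = -1) :
    ⁅raising D t v₀ v₁ e, lowering D t v₀ e⁆ = weight K F v₁ := by
  refine derivation_ext_single fun m Q => ?_
  have hDinv : D t⁻¹ = -t⁻¹ ^ 2 := by rw [D.leibniz_inv, hDt, smul_eq_mul, mul_one]
  have hv₀e' : v₀ e = 2⁻¹ := by linarith
  rw [Derivation.commutator_apply, lowering_single, raising_single, raising_single,
    lowering_single, weight_single, sub_add_cancel, add_sub_cancel_right, ← single_sub]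
  congr 1
  simp only [map_sub, map_add, hv₀e', hv₁e, Derivation.leibniz, smul_eq_mul, D.map_intCast,
    D.map_ratCast, D.map_ofNat, D.map_one_eq_zero, hDt, hDinv]
  push_cast
  field_simp
  ring

end SkewSl2

theorem stmt_10_general {K : Type*} [Field K] [CharZero K]
    {M : Type*} [AddCommGroup M]
    (D : Derivation K (RatFunc K) (RatFunc K)) (hD : D RatFunc.X = 1)
    (v₀ : M →+ ℚ)
    (v₁ : M →+ ℤ) (e : M) (hv₀e : 2 * v₀ e = 1) (hv₁e : v₁ e = -1) :
    ∃ Dm Dp Dd : Derivation K (AddMonoidAlgebra (RatFunc K) M) (AddMonoidAlgebra (RatFunc K) M),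
      (∀ (Q : RatFunc K) (m : M), Dm (AddMonoidAlgebra.single m Q) =
        AddMonoidAlgebra.single (m - e)
          (2 * (((v₀ m : ℚ) : RatFunc K) * Q + RatFunc.X * D Q))) ∧
      (∀ (Q : RatFunc K) (m : M), Dp (AddMonoidAlgebra.single m Q) =
        AddMonoidAlgebra.single (m + e)
          (2 * ((((v₀ m : ℚ) : RatFunc K) * (1 - RatFunc.X⁻¹) + (v₁ m : RatFunc K)) * Q +
            (RatFunc.X - 1) * D Q))) ∧
      (∀ (Q : RatFunc K) (m : M), Dd (AddMonoidAlgebra.single m Q) =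
        AddMonoidAlgebra.single m (-(2 * (v₁ m : RatFunc K)) * Q)) ∧
      (∀ f, Dp (Dm f) - Dm (Dp f) = Dd f) ∧
      (∀ f, Dd (Dp f) - Dp (Dd f) = 2 • Dp f) ∧
      (∀ f, Dd (Dm f) - Dm (Dd f) = -(2 • Dm f)) := by
  open SkewSl2 in
  refine ⟨lowering D RatFunc.X v₀ e, raising D RatFunc.X v₀ v₁ e, weight K (RatFunc K) v₁,
    fun Q m => lowering_single D _ v₀ e m Q, fun Q m => raising_single D _ v₀ v₁ e m Q,
    fun Q m => weight_single v₁ m Q, fun f => ?_, fun f => ?_, fun f => ?_⟩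
  · rw [← Derivation.commutator_apply, raising_lowering RatFunc.X_ne_zero hD hv₀e hv₁e]
  · rw [← Derivation.commutator_apply, weight_raising hv₁e, Derivation.smul_apply]
  · rw [← Derivation.commutator_apply, weight_lowering hv₁e, Derivation.neg_apply,
      Derivation.smul_apply]

/-- Skew sl₂-triple: given `v₁ : M → ℤ` a homomorphism, `v₀ : M → ℚ` with
`2v₀` a homomorphism `M → ℤ`, `2v₀(e) = 1`, `v₁(e) = −1`, the `K`-linear maps of `K(t)[M]`
determined by `∂₋(Qχ^m) = 2(v₀(m)Q + tQ′)χ^{m−e}`,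
`∂₊(Qχ^m) = 2((v₀(m)(1 − 1/t) + v₁(m))Q + (t−1)Q′)χ^{m+e}`, and
`δ(Qχ^m) = −2v₁(m)·Q·χ^m` are `K`-derivations and satisfy the sl₂-relations
`[∂₊,∂₋] = δ`, `[δ,∂₊] = 2∂₊`, `[δ,∂₋] = −2∂₋`. -/
theorem stmt_10 {K : Type*} [Field K] [CharZero K]
    {M : Type*} [AddCommGroup M] [Module.Free ℤ M] [Module.Finite ℤ M]
    (D : Derivation K (RatFunc K) (RatFunc K)) (hD : D RatFunc.X = 1)
    (v₀ : M →+ ℚ) (h2v₀ : ∀ m : M, ∃ n : ℤ, (n : ℚ) = 2 * v₀ m)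
    (v₁ : M →+ ℤ) (e : M) (hv₀e : 2 * v₀ e = 1) (hv₁e : v₁ e = -1) :
    ∃ Dm Dp Dd : Derivation K (AddMonoidAlgebra (RatFunc K) M) (AddMonoidAlgebra (RatFunc K) M),
      (∀ (Q : RatFunc K) (m : M), Dm (AddMonoidAlgebra.single m Q) =
        AddMonoidAlgebra.single (m - e)
          (2 * (((v₀ m : ℚ) : RatFunc K) * Q + RatFunc.X * D Q))) ∧
      (∀ (Q : RatFunc K) (m : M), Dp (AddMonoidAlgebra.single m Q) =
        AddMonoidAlgebra.single (m + e)
          (2 * ((((v₀ m : ℚ) : RatFunc K) * (1 - RatFunc.X⁻¹) + (v₁ m : RatFunc K)) * Q +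
            (RatFunc.X - 1) * D Q))) ∧
      (∀ (Q : RatFunc K) (m : M), Dd (AddMonoidAlgebra.single m Q) =
        AddMonoidAlgebra.single m (-(2 * (v₁ m : RatFunc K)) * Q)) ∧
      (∀ f, Dp (Dm f) - Dm (Dp f) = Dd f) ∧
      (∀ f, Dd (Dp f) - Dp (Dd f) = 2 • Dp f) ∧
      (∀ f, Dd (Dm f) - Dm (Dd f) = -(2 • Dm f)) :=
  stmt_10_general D hD v₀ v₁ e hv₀e hv₁e
end

section
/- Let ρ₋, ρ₊ ∈ Hom(M,ℤ) and e ∈ M with ρ₋(e) = 1 and ρ₊(e) = −1. The K-linear maps of the group algebra K[M] determined by ∂₋(χ^m) = ρ₋(m)χ^{m−e}, ∂₊(χ^m) = ρ₊(m)χ^{m+e}, and δ(χ^m) = (ρ₋(m) − ρ₊(m))χ^m are K-derivations and satisfy the sl₂-relations ∂₊∘∂₋ − ∂₋∘∂₊ = δ, δ∘∂₊ − ∂₊∘δ = 2∂₊, and δ∘∂₋ − ∂₋∘δ = −2∂₋. -/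
/-!
Each of the three maps has the form `χ^m ↦ ρ(m) χ^{m+s}` for an additive `ρ : M → ℤ` and a shift
`s ∈ M`; additivity of `ρ` is exactly the Leibniz rule on monomials. The commutator of two such
derivations is again one of them: evaluating on `χ^m`, the quadratic terms `ρ(m)σ(m)` cancel and
`⁅D_{ρ,s}, D_{σ,t}⁆ = D_{ρ(t)σ - σ(s)ρ, s+t}`. The sl₂-relations are the three instances of this
formula, the values `ρ₋(e) = 1`, `ρ₊(e) = -1` turning the new weights into `ρ₋ - ρ₊`, `2ρ₊`, `-2ρ₋`.
-/

namespace AddMonoidAlgebra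

variable {R M : Type*} [CommRing R] [AddCommMonoid M]

theorem derivation_ext {N : Type*} [AddCommMonoid N] [Module R N] [Module R[M] N]
    [IsScalarTower R R[M] N] {D₁ D₂ : Derivation R R[M] N}
    (h : ∀ m, D₁ (single m 1) = D₂ (single m 1)) : D₁ = D₂ :=
  Derivation.ext fun f => LinearMap.congr_fun
    ((basis M R).ext (f₁ := D₁.toLinearMap) (f₂ := D₂.toLinearMap) (by simpa using h)) f

noncomputable def weightShiftLinearMap (ρ : M →+ ℤ) (s : M) : R[M] →ₗ[R] R[M] :=
  (basis M R).constr R fun m => single (m + s) (ρ m : R)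

theorem weightShiftLinearMap_single (ρ : M →+ ℤ) (s m : M) (c : R) :
    weightShiftLinearMap ρ s (single m c) = single (m + s) (c * ρ m) := by
  rw [← mul_one c, ← smul_single', map_smul, ← basis_apply, weightShiftLinearMap,
    Module.Basis.constr_basis, smul_single', mul_one]

theorem weightShiftLinearMap_leibniz (ρ : M →+ ℤ) (s : M) (f g : R[M]) :
    weightShiftLinearMap ρ s (f * g) =
      f • weightShiftLinearMap ρ s g + g • weightShiftLinearMap ρ s f := by
  induction f using induction_linear with
  | zero => simp
  | add f₁ f₂ h₁ h₂ => simp only [add_mul, map_add, h₁, h₂, add_smul, smul_add]; abel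
  | single m c =>
    induction g using induction_linear with
    | zero => simp
    | add g₁ g₂ h₁ h₂ => simp only [mul_add, map_add, h₁, h₂, add_smul, smul_add]; abel
    | single n d =>
      simp only [single_mul_single, weightShiftLinearMap_single, smul_eq_mul, map_add]
      rw [← add_assoc, ← add_assoc, add_comm n m, ← single_add]
      congr 1
      push_cast
      ring

noncomputable def weightShiftDerivation (ρ : M →+ ℤ) (s : M) : Derivation R R[M] R[M] :=
  Derivation.mk' (weightShiftLinearMap ρ s) (weightShiftLinearMap_leibniz ρ s)

theorem weightShiftDerivation_single (ρ : M →+ ℤ) (s m : M) (c : R) :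
    weightShiftDerivation ρ s (single m c) = single (m + s) (c * ρ m) :=
  weightShiftLinearMap_single ρ s m c

theorem weightShiftDerivation_zsmul (n : ℤ) (ρ : M →+ ℤ) (s : M) :
    weightShiftDerivation (R := R) (n • ρ) s = n • weightShiftDerivation ρ s :=
  derivation_ext fun m => by
    rw [Derivation.smul_apply, weightShiftDerivation_single, weightShiftDerivation_single,
      smul_single]
    push_cast
    simp

theorem lie_weightShiftDerivation (ρ σ : M →+ ℤ) (s t : M) :
    ⁅weightShiftDerivation (R := R) ρ s, weightShiftDerivation σ t⁆ =
      weightShiftDerivation (R := R) (ρ t • σ - σ s • ρ) (s + t) :=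
  derivation_ext fun m => by
    rw [Derivation.commutator_apply]
    simp only [weightShiftDerivation_single]
    rw [add_right_comm m t s, add_assoc, ← single_sub]
    congr 1
    push_cast [map_add, AddMonoidHom.sub_apply, AddMonoidHom.smul_apply, smul_eq_mul]
    ring

end AddMonoidAlgebra

open AddMonoidAlgebra

theorem stmt_11_general {K : Type*} [Field K]
    {M : Type*} [AddCommGroup M]
    (ρm ρp : M →+ ℤ) (e : M) (hρm : ρm e = 1) (hρp : ρp e = -1) :
    ∃ Dm Dp Dd : Derivation K (AddMonoidAlgebra K M) (AddMonoidAlgebra K M),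
      (∀ m : M, Dm (AddMonoidAlgebra.single m (1 : K)) =
        AddMonoidAlgebra.single (m - e) ((ρm m : K))) ∧
      (∀ m : M, Dp (AddMonoidAlgebra.single m (1 : K)) =
        AddMonoidAlgebra.single (m + e) ((ρp m : K))) ∧
      (∀ m : M, Dd (AddMonoidAlgebra.single m (1 : K)) =
        AddMonoidAlgebra.single m ((ρm m - ρp m : ℤ) : K)) ∧
      (∀ f, Dp (Dm f) - Dm (Dp f) = Dd f) ∧
      (∀ f, Dd (Dp f) - Dp (Dd f) = 2 • Dp f) ∧
      (∀ f, Dd (Dm f) - Dm (Dd f) = -(2 • Dm f)) := by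
  set Dm := weightShiftDerivation (R := K) ρm (-e)
  set Dp := weightShiftDerivation (R := K) ρp e
  set Dd := weightShiftDerivation (R := K) (ρm - ρp) 0
  have lie_Dp_Dm : ⁅Dp, Dm⁆ = Dd := by
    rw [lie_weightShiftDerivation]
    congr 1 <;> simp [hρm, hρp]
  have lie_Dd_Dp : ⁅Dd, Dp⁆ = (2 : ℤ) • Dp := by
    rw [lie_weightShiftDerivation, ← weightShiftDerivation_zsmul]
    congr 1 <;> simp [hρm, hρp]
  have lie_Dd_Dm : ⁅Dd, Dm⁆ = (-2 : ℤ) • Dm := by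
    rw [lie_weightShiftDerivation, ← weightShiftDerivation_zsmul]
    congr 1 <;> simp [hρm, hρp]
  refine ⟨Dm, Dp, Dd, fun m => ?_, fun m => ?_, fun m => ?_,
    fun f => ?_, fun f => ?_, fun f => ?_⟩
  · simp [Dm, weightShiftDerivation_single, sub_eq_add_neg]
  · simp [Dp, weightShiftDerivation_single]
  · simp [Dd, weightShiftDerivation_single]
  · rw [← Derivation.commutator_apply, lie_Dp_Dm]
  · rw [← Derivation.commutator_apply, lie_Dd_Dp, Derivation.smul_apply, ofNat_zsmul]
  · rw [← Derivation.commutator_apply, lie_Dd_Dm, Derivation.smul_apply, neg_smul, ofNat_zsmul]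

/-- Let `ρ₋, ρ₊ : M → ℤ` be homomorphisms and `e ∈ M` with `ρ₋(e) = 1`,
`ρ₊(e) = −1`.  The `K`-linear maps of the group algebra `K[M]` determined by
`∂₋(χ^m) = ρ₋(m)χ^{m−e}`, `∂₊(χ^m) = ρ₊(m)χ^{m+e}`, `δ(χ^m) = (ρ₋(m) − ρ₊(m))χ^m`
are `K`-derivations and satisfy the sl₂-relations `[∂₊,∂₋] = δ`, `[δ,∂₊] = 2∂₊`,
`[δ,∂₋] = −2∂₋`. -/
theorem stmt_11 {K : Type*} [Field K] [CharZero K]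
    {M : Type*} [AddCommGroup M] [Module.Free ℤ M] [Module.Finite ℤ M]
    (ρm ρp : M →+ ℤ) (e : M) (hρm : ρm e = 1) (hρp : ρp e = -1) :
    ∃ Dm Dp Dd : Derivation K (AddMonoidAlgebra K M) (AddMonoidAlgebra K M),
      (∀ m : M, Dm (AddMonoidAlgebra.single m (1 : K)) =
        AddMonoidAlgebra.single (m - e) ((ρm m : K))) ∧
      (∀ m : M, Dp (AddMonoidAlgebra.single m (1 : K)) =
        AddMonoidAlgebra.single (m + e) ((ρp m : K))) ∧
      (∀ m : M, Dd (AddMonoidAlgebra.single m (1 : K)) =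
        AddMonoidAlgebra.single m ((ρm m - ρp m : ℤ) : K)) ∧
      (∀ f, Dp (Dm f) - Dm (Dp f) = Dd f) ∧
      (∀ f, Dd (Dp f) - Dp (Dd f) = 2 • Dp f) ∧
      (∀ f, Dd (Dm f) - Dm (Dd f) = -(2 • Dm f)) :=
  stmt_11_general ρm ρp e hρm hρp
end

section
/- Let R = K[x,y,z]/(z² − 4xy − 1), let S = R[s, s⁻¹] be the Laurent polynomial ring over R, and let σ be the K-algebra involution of S determined by σ(x) = −x, σ(y) = −y, σ(z) = −z, σ(s) = s. Then the subalgebra S^σ of σ-invariants equals the K-subalgebra of S generated by x², y², z², xy, xz, yz, s, and s⁻¹. -/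
/-!
Let `A` be the subalgebra generated by the listed invariants and `g = {x, y, z}`. Products of
two elements of `g` lie in `A`, so `A + span_A g` is already a subalgebra; as it contains
`x, y, z, s, s⁻¹`, every `f ∈ S` is `a + m` with `a ∈ A` and `m ∈ span_A g`. Now `σ` fixes
`A` and negates `span_A g`, so `σ f = f` forces `2 m = 0`, i.e. `f = a`.
-/

open MvPolynomial

set_option synthInstance.maxHeartbeats 1000000
set_option maxHeartbeats 1000000

/-- The ring `R = K[x,y,z]/(z² − 4xy − 1)`. -/
noncomputable abbrev XYZRing (K : Type*) [Field K] : Type _ :=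
  MvPolynomial (Fin 3) K ⧸
    (Ideal.span {X 2 ^ 2 - 4 * (X 0 * X 1) - 1} : Ideal (MvPolynomial (Fin 3) K))

/-- the class of `x` in `R`, viewed in the Laurent polynomial ring `S = R[s,s⁻¹]` -/
noncomputable abbrev lX (K : Type*) [Field K] : LaurentPolynomial (XYZRing K) :=
  LaurentPolynomial.C (Ideal.Quotient.mk _ (X 0))
/-- the class of `y` in `R`, viewed in `S = R[s,s⁻¹]` -/
noncomputable abbrev lY (K : Type*) [Field K] : LaurentPolynomial (XYZRing K) :=
  LaurentPolynomial.C (Ideal.Quotient.mk _ (X 1))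
/-- the class of `z` in `R`, viewed in `S = R[s,s⁻¹]` -/
noncomputable abbrev lZ (K : Type*) [Field K] : LaurentPolynomial (XYZRing K) :=
  LaurentPolynomial.C (Ideal.Quotient.mk _ (X 2))


open scoped Pointwise

theorem Algebra.toSubmodule_adjoin_eq_one_sup_span {A S : Type*} [CommSemiring A] [Semiring S]
    [Algebra A S] {g : Set S} (hg : g * g ⊆ (1 : Submodule A S)) :
    Subalgebra.toSubmodule (Algebra.adjoin A g) = 1 ⊔ Submodule.span A g := by
  set M : Submodule A S := 1 ⊔ Submodule.span A g with hM
  have hMM : M * M ≤ M := by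
    have hspan : Submodule.span A g * Submodule.span A g ≤ M :=
      (Submodule.span_mul_span A g g).trans_le <| (Submodule.span_le.mpr hg).trans le_sup_left
    rw [hM, Submodule.sup_mul, Submodule.mul_sup, Submodule.mul_sup, one_mul, one_mul, mul_one]
    exact sup_le (sup_le le_sup_left le_sup_right) (sup_le le_sup_right hspan)
  let B : Subalgebra A S := M.toSubalgebra (Submodule.mem_sup_left (Submodule.one_le.mp le_rfl))
    fun _ _ hx hy ↦ hMM (Submodule.mul_mem_mul hx hy)
  refine le_antisymm ?_ (sup_le ?_ (Algebra.span_le_adjoin A g))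
  · exact Algebra.adjoin_le (S := B) fun x hx ↦
      show x ∈ M from Submodule.mem_sup_right (Submodule.subset_span hx)
  · exact Algebra.toSubmodule_bot.symm.trans_le (OrderHomClass.mono _ bot_le)

theorem AlgHom.map_eq_neg_of_mem_span {K S : Type*} [CommSemiring K] [CommRing S] [Algebra K S]
    (σ : S →ₐ[K] S) {A : Subalgebra K S} (hA : ∀ a ∈ A, σ a = a) {g : Set S}
    (hg : ∀ x ∈ g, σ x = -x) {m : S} (hm : m ∈ Submodule.span A g) : σ m = -m := by
  induction hm using Submodule.span_induction with
  | mem x hx => exact hg x hx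
  | zero => simp
  | add x y _ _ hx hy => rw [map_add, hx, hy, neg_add]
  | smul a x _ hx => rw [Subalgebra.smul_def, smul_eq_mul, map_mul, hA a a.2, hx, mul_neg]

theorem AlgHom.setOf_map_eq_self_eq_of_adjoin_eq_top {K S : Type*} [Field K] [NeZero (2 : K)]
    [CommRing S] [Algebra K S] (σ : S →ₐ[K] S) {A : Subalgebra K S}
    (hA : ∀ a ∈ A, σ a = a) {g : Set S} (hg : ∀ x ∈ g, σ x = -x) (hgg : ∀ x ∈ g, ∀ y ∈ g, x * y ∈ A)
    (htop : Algebra.adjoin A g = ⊤) :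
    {f | σ f = f} = A := by
  refine Set.Subset.antisymm (fun f hf ↦ ?_) hA
  have hf_mem : f ∈ Subalgebra.toSubmodule (Algebra.adjoin A g) := by simp [htop]
  rw [Algebra.toSubmodule_adjoin_eq_one_sup_span, Submodule.mem_sup] at hf_mem
  · obtain ⟨_, ha, m, hm, rfl⟩ := hf_mem
    obtain ⟨a, rfl⟩ := Submodule.mem_one.mp ha
    have hm0 : (2 : K) • m = 0 := by
      have hσf : σ (a + m) = a + m := hf
      rw [map_add, hA a a.2, σ.map_eq_neg_of_mem_span hA hg hm] at hσf
      rw [two_smul]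
      linear_combination -hσf
    rw [smul_eq_zero, or_iff_right two_ne_zero] at hm0
    simp [hm0]
  · exact Set.mul_subset_iff.mpr fun x hx y hy ↦
      Submodule.mem_one.mpr ⟨⟨x * y, hgg x hx y hy⟩, rfl⟩

theorem LaurentPolynomial.adjoin_T_one_T_neg_one (R : Type*) [CommSemiring R] :
    Algebra.adjoin R {(T 1 : LaurentPolynomial R), T (-1)} = ⊤ := by
  refine Algebra.eq_top_iff.mpr fun f ↦ ?_
  induction f using LaurentPolynomial.induction_on' with
  | add p q hp hq => exact add_mem hp hq
  | C_mul_T n a =>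
    refine Subalgebra.mul_mem _ (Subalgebra.algebraMap_mem _ a) ?_
    have hT : T 1 ∈ Algebra.adjoin R {(T 1 : LaurentPolynomial R), T (-1)} :=
      Algebra.subset_adjoin (by simp)
    have hT' : T (-1) ∈ Algebra.adjoin R {(T 1 : LaurentPolynomial R), T (-1)} :=
      Algebra.subset_adjoin (by simp)
    obtain ⟨k, rfl | rfl⟩ := n.eq_nat_or_neg
    · simpa [T_pow] using pow_mem hT k
    · simpa [T_pow] using pow_mem hT' k

theorem LaurentPolynomial.adjoin_C_image_union_T_eq_top {K R : Type*} [CommSemiring K]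
    [CommSemiring R] [Algebra K R] {s : Set R} (hs : Algebra.adjoin K s = ⊤) :
    Algebra.adjoin K (C '' s ∪ {(T 1 : LaurentPolynomial R), T (-1)}) = ⊤ := by
  change Algebra.adjoin K (algebraMap R (LaurentPolynomial R) '' s ∪ _) = ⊤
  rw [← Algebra.adjoin_eq_adjoin_union K s _ hs, adjoin_T_one_T_neg_one,
    Subalgebra.restrictScalars_top]

theorem Ideal.Quotient.adjoin_range_mk_X_eq_top {K ι : Type*} [CommRing K]
    (I : Ideal (MvPolynomial ι K)) :
    Algebra.adjoin K (Set.range fun i ↦ Ideal.Quotient.mk I (X i)) = ⊤ := by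
  have hrange : (Set.range fun i ↦ Ideal.Quotient.mk I (X i)) =
      Ideal.Quotient.mkₐ K I '' Set.range X := by
    rw [← Set.range_comp]; rfl
  rw [hrange, Algebra.adjoin_image, MvPolynomial.adjoin_range_X, Algebra.map_top,
    AlgHom.range_eq_top]
  exact Ideal.Quotient.mkₐ_surjective K I

open LaurentPolynomial in
theorem adjoin_lX_lY_lZ_T_eq_top (K : Type*) [Field K] :
    Algebra.adjoin K {lX K, lY K, lZ K, T 1, T (-1)} = ⊤ := by
  refine eq_top_iff.mpr ?_
  rw [← adjoin_C_image_union_T_eq_top (Ideal.Quotient.adjoin_range_mk_X_eq_top _)]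
  refine Algebra.adjoin_mono ?_
  rintro _ (⟨_, ⟨i, rfl⟩, rfl⟩ | hT)
  · fin_cases i
    exacts [Set.mem_insert _ _, Set.mem_insert_of_mem _ (Set.mem_insert _ _),
      Set.mem_insert_of_mem _ (Set.mem_insert_of_mem _ (Set.mem_insert _ _))]
  · rcases hT with rfl | rfl <;>
      simp only [Set.mem_insert_iff, Set.mem_singleton_iff, true_or, or_true]

theorem stmt_16_general {K : Type*} [Field K] [CharZero K]
    (σ : LaurentPolynomial (XYZRing K) →ₐ[K] LaurentPolynomial (XYZRing K))
    (hσx : σ (lX K) = -lX K) (hσy : σ (lY K) = -lY K) (hσz : σ (lZ K) = -lZ K)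
    (hσs : σ (LaurentPolynomial.T 1) = LaurentPolynomial.T 1) :
    {f : LaurentPolynomial (XYZRing K) | σ f = f} =
      (Algebra.adjoin K
        ({lX K ^ 2, lY K ^ 2, lZ K ^ 2, lX K * lY K, lX K * lZ K, lY K * lZ K,
          LaurentPolynomial.T 1, LaurentPolynomial.T (-1)} :
          Set (LaurentPolynomial (XYZRing K))) : Set (LaurentPolynomial (XYZRing K))) := by
  open LaurentPolynomial in
  set A := Algebra.adjoin K ({lX K ^ 2, lY K ^ 2, lZ K ^ 2, lX K * lY K, lX K * lZ K,
    lY K * lZ K, T 1, T (-1)} : Set (LaurentPolynomial (XYZRing K)))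
  have hσT : σ (T (-1)) = T (-1) :=
    left_inv_eq_right_inv (a := T 1)
      (by rw [← hσs, ← map_mul, ← T_add, neg_add_cancel, T_zero, map_one])
      (by rw [← T_add, add_neg_cancel, T_zero])
  have hfix : ∀ a ∈ A, σ a = a := fun a ha ↦ AlgHom.adjoin_le_equalizer σ (AlgHom.id K _)
    (by rintro _ (rfl | rfl | rfl | rfl | rfl | rfl | rfl | rfl) <;>
      simp [hσx, hσy, hσz, hσs, hσT]) ha
  refine σ.setOf_map_eq_self_eq_of_adjoin_eq_top hfix (g := {lX K, lY K, lZ K}) ?_ ?_ ?_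
  · rintro _ (rfl | rfl | rfl) <;> assumption
  · rintro _ (rfl | rfl | rfl) _ (rfl | rfl | rfl) <;> exact Algebra.subset_adjoin
      (by simp [sq, mul_comm (lY K) (lX K), mul_comm (lZ K) (lX K), mul_comm (lZ K) (lY K)])
  · apply Subalgebra.restrictScalars_injective K
    rw [Subalgebra.restrictScalars_top]
    refine (Algebra.adjoin_union_eq_adjoin_adjoin (A := LaurentPolynomial (XYZRing K)) K _ _
      ).symm.trans (eq_top_iff.mpr ?_)
    rw [← adjoin_lX_lY_lZ_T_eq_top K]
    refine Algebra.adjoin_mono ?_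
    rintro _ (rfl | rfl | rfl | rfl | rfl) <;>
      simp only [Set.mem_union, Set.mem_insert_iff, Set.mem_singleton_iff, true_or, or_true]

/-- Let `R = K[x,y,z]/(z² − 4xy − 1)`, `S = R[s,s⁻¹]` and let `σ` be the
`K`-algebra involution of `S` with `σ(x) = −x`, `σ(y) = −y`, `σ(z) = −z`, `σ(s) = s`.  Then
the invariants `S^σ` form the `K`-subalgebra generated by
`x²`, `y²`, `z²`, `xy`, `xz`, `yz`, `s` and `s⁻¹`. -/
theorem stmt_16 {K : Type*} [Field K] [CharZero K]
    (σ : LaurentPolynomial (XYZRing K) →ₐ[K] LaurentPolynomial (XYZRing K))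
    (hσσ : ∀ f, σ (σ f) = f)
    (hσx : σ (lX K) = -lX K) (hσy : σ (lY K) = -lY K) (hσz : σ (lZ K) = -lZ K)
    (hσs : σ (LaurentPolynomial.T 1) = LaurentPolynomial.T 1) :
    {f : LaurentPolynomial (XYZRing K) | σ f = f} =
      (Algebra.adjoin K
        ({lX K ^ 2, lY K ^ 2, lZ K ^ 2, lX K * lY K, lX K * lZ K, lY K * lZ K,
          LaurentPolynomial.T 1, LaurentPolynomial.T (-1)} :
          Set (LaurentPolynomial (XYZRing K))) : Set (LaurentPolynomial (XYZRing K))) :=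
  stmt_16_general σ hσx hσy hσz hσs
end
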